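/- arXiv:1304.3519 — 7 statements merged into one kernel-verified Lean document; each statement's English description precedes it below -/
import Mathlib

section
/- (Principle 1 / Theorem 2.) Let α > 1, μ > 0, C > 0 be real numbers and let σ be a real number with σ ≥ μ(α−1)·C^α. Then for all real w₁, w₂, w₃, w₄ ≥ 0 with w₁ + w₂ + w₃ + w₄ ≤ C, one has 2σ + μ·(w₁+w₂+w₃)^α + μ·(w₂+w₃+w₄)^α ≥ σ + μ·(w₁+w₂+w₃+w₄)^α. That is, consolidating all VMs behind a single ToR switch (power σ + μ·(w₁+w₂+w₃+w₄)^α) never consumes more ToR-switch power than splitting them across two ToR switches (power 2σ + μ·(w₁+w₂+w₃)^α + μ·(w₂+w₃+w₄)^α). -/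
/-! Writing `s = w₁ + w₂ + w₃ + w₄ = a + w₄` with `a = w₁ + w₂ + w₃`, convexity of `x ↦ x ^ α`
bounds the extra cost of the load `w₄` by the slope at `s ≤ C`: `s ^ α - a ^ α ≤ α C ^ (α - 1) w₄`.
The tangent line at `C` (Young's inequality) turns this into `w₄ ^ α + (α - 1) C ^ α`, and
`w₄ ^ α ≤ (w₂ + w₃ + w₄) ^ α`; the assumption on `σ` pays for the remaining `μ (α - 1) C ^ α`. -/

open Real

lemma rpow_add_mul_sub_le_rpow {α c x : ℝ} (hα : 1 ≤ α) (hc : 0 < c) (hx : 0 ≤ x) :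
    c ^ α + α * c ^ (α - 1) * (x - c) ≤ x ^ α := by
  have hbern := one_add_mul_self_le_rpow_one_add (s := x / c - 1)
    (by linarith [div_nonneg hx hc.le]) hα
  rw [add_sub_cancel, div_rpow hx hc.le, le_div_iff₀ (by positivity)] at hbern
  calc c ^ α + α * c ^ (α - 1) * (x - c) = (1 + α * (x / c - 1)) * c ^ α := by
        rw [rpow_sub_one hc.ne']; field_simp
    _ ≤ x ^ α := hbern

lemma rpow_add_le_rpow_add_mul {α a d : ℝ} (hα : 1 ≤ α) (ha : 0 ≤ a) (hd : 0 ≤ d) :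
    (a + d) ^ α ≤ a ^ α + α * (a + d) ^ (α - 1) * d := by
  rcases (add_nonneg ha hd).eq_or_lt with hs | hs
  · obtain ⟨rfl, rfl⟩ := (add_eq_zero_iff_of_nonneg ha hd).mp hs.symm
    simp
  · linarith [rpow_add_mul_sub_le_rpow hα hs ha]

lemma mul_rpow_sub_one_mul_le {α C d : ℝ} (hα : 1 ≤ α) (hC : 0 < C) (hd : 0 ≤ d) :
    α * C ^ (α - 1) * d ≤ d ^ α + (α - 1) * C ^ α := by
  have htangent := rpow_add_mul_sub_le_rpow hα hC hd
  have hC_pow : C ^ (α - 1) * C = C ^ α := by rw [← rpow_add_one hC.ne', sub_add_cancel]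
  linear_combination htangent + α * hC_pow

lemma rpow_add_le_rpow_add_rpow_add {α C a d : ℝ} (hα : 1 ≤ α) (hC : 0 < C) (ha : 0 ≤ a)
    (hd : 0 ≤ d) (hadC : a + d ≤ C) :
    (a + d) ^ α ≤ a ^ α + d ^ α + (α - 1) * C ^ α := by
  have hslope : (a + d) ^ (α - 1) ≤ C ^ (α - 1) :=
    rpow_le_rpow (add_nonneg ha hd) hadC (by linarith)
  calc (a + d) ^ α ≤ a ^ α + α * (a + d) ^ (α - 1) * d := rpow_add_le_rpow_add_mul hα ha hd
    _ ≤ a ^ α + α * C ^ (α - 1) * d := by gcongr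
    _ ≤ a ^ α + d ^ α + (α - 1) * C ^ α := by linarith [mul_rpow_sub_one_mul_le hα hC hd]

/-- Principle 1 (Theorem 2): consolidating all VMs behind a single ToR switch never
consumes more ToR-switch power than splitting them across two ToR switches. -/
theorem principle1_compact_into_racks
    (α μ C σ : ℝ) (hα : 1 < α) (hμ : 0 < μ) (hC : 0 < C)
    (hσ : σ ≥ μ * (α - 1) * C ^ α) :
    ∀ w₁ w₂ w₃ w₄ : ℝ, 0 ≤ w₁ → 0 ≤ w₂ → 0 ≤ w₃ → 0 ≤ w₄ →
      w₁ + w₂ + w₃ + w₄ ≤ C →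
      2 * σ + μ * (w₁ + w₂ + w₃) ^ α + μ * (w₂ + w₃ + w₄) ^ α ≥
        σ + μ * (w₁ + w₂ + w₃ + w₄) ^ α := by
  intro w₁ w₂ w₃ w₄ h₁ h₂ h₃ h₄ hload
  have hsplit := rpow_add_le_rpow_add_rpow_add hα.le hC (by positivity) h₄ hload
  have hw₄ : w₄ ^ α ≤ (w₂ + w₃ + w₄) ^ α := rpow_le_rpow h₄ (by linarith) (by linarith)
  have hcost : μ * (w₁ + w₂ + w₃ + w₄) ^ α ≤
      μ * ((w₁ + w₂ + w₃) ^ α + (w₂ + w₃ + w₄) ^ α + (α - 1) * C ^ α) := by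
    gcongr; linarith
  linarith
end

section
/- Let α be a real number with 1 < α ≤ 2 and let w₁, w₄ ≥ 0 be reals. Define f(w₂, w₃) = (w₁+w₂+w₃)^α + (w₂+w₃+w₄)^α − (w₁+w₂+w₃+w₄)^α. Then f is monotonically nondecreasing in each argument on the nonnegative quadrant: for all reals with 0 ≤ w₂ ≤ w₂′ and 0 ≤ w₃ ≤ w₃′, one has f(w₂, w₃) ≤ f(w₂′, w₃′). -/
/-!
On the ray `s ≥ 0` the function `(a + s) ^ α + (s + b) ^ α - (a + s + b) ^ α` has derivative
`α ((a + s) ^ (α - 1) + (s + b) ^ (α - 1) - (a + s + b) ^ (α - 1))`, which is nonnegative because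
`x ↦ x ^ (α - 1)` is subadditive for `0 ≤ α - 1 ≤ 1`. Since `f(w₂, w₃)` depends on `(w₂, w₃)` only
through `s = w₂ + w₃`, monotonicity in `s` gives the claim.
-/

open Real Set

lemma rpow_add_add_le_rpow_add_add_rpow_add {p a b s : ℝ} (hp₀ : 0 ≤ p) (hp₁ : p ≤ 1)
    (ha : 0 ≤ a) (hb : 0 ≤ b) (hs : 0 ≤ s) :
    (a + s + b) ^ p ≤ (a + s) ^ p + (s + b) ^ p :=
  calc (a + s + b) ^ p ≤ (a + s) ^ p + b ^ p := rpow_add_le_add_rpow (by positivity) hb hp₀ hp₁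
    _ ≤ (a + s) ^ p + (s + b) ^ p := by gcongr; linarith

lemma hasDerivAt_rpow_add_add_rpow_sub_rpow {α : ℝ} (hα : 1 ≤ α) (a b s : ℝ) :
    HasDerivAt (fun s => (a + s) ^ α + (s + b) ^ α - (a + s + b) ^ α)
      (α * ((a + s) ^ (α - 1) + (s + b) ^ (α - 1) - (a + s + b) ^ (α - 1))) s := by
  have hid := hasDerivAt_id' s
  exact ((((hid.const_add a).rpow_const (.inr hα)).add
    ((hid.add_const b).rpow_const (.inr hα))).sub
    (((hid.const_add a).add_const b).rpow_const (.inr hα))).congr_deriv (by ring)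

theorem monotoneOn_rpow_add_add_rpow_sub_rpow {α a b : ℝ} (hα₁ : 1 ≤ α) (hα₂ : α ≤ 2)
    (ha : 0 ≤ a) (hb : 0 ≤ b) :
    MonotoneOn (fun s => (a + s) ^ α + (s + b) ^ α - (a + s + b) ^ α) (Ici 0) := by
  have hderiv := hasDerivAt_rpow_add_add_rpow_sub_rpow hα₁ a b
  refine monotoneOn_of_hasDerivWithinAt_nonneg (convex_Ici 0)
    (fun s _ => (hderiv s).continuousAt.continuousWithinAt)
    (fun s _ => (hderiv s).hasDerivWithinAt) fun s hs => ?_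
  rw [interior_Ici] at hs
  have hsubadd := rpow_add_add_le_rpow_add_add_rpow_add (p := α - 1) (by linarith) (by linarith) ha hb
    (mem_Ioi.1 hs).le
  exact mul_nonneg (by linarith) (by linarith)

/-- For `1 < α ≤ 2` and `w₁, w₄ ≥ 0`, the function
`f(w₂,w₃) = (w₁+w₂+w₃)^α + (w₂+w₃+w₄)^α − (w₁+w₂+w₃+w₄)^α`
is monotonically nondecreasing in each argument on the nonnegative quadrant. -/
theorem f_monotone_in_w2_w3
    (α : ℝ) (hα1 : 1 < α) (hα2 : α ≤ 2)
    (w₁ w₄ : ℝ) (hw₁ : 0 ≤ w₁) (hw₄ : 0 ≤ w₄) :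
    ∀ w₂ w₂' w₃ w₃' : ℝ, 0 ≤ w₂ → w₂ ≤ w₂' → 0 ≤ w₃ → w₃ ≤ w₃' →
      (w₁ + w₂ + w₃) ^ α + (w₂ + w₃ + w₄) ^ α - (w₁ + w₂ + w₃ + w₄) ^ α ≤
        (w₁ + w₂' + w₃') ^ α + (w₂' + w₃' + w₄) ^ α - (w₁ + w₂' + w₃' + w₄) ^ α := by
  intro w₂ w₂' w₃ w₃' hw₂ hw₂' hw₃ hw₃'
  have hmono := monotoneOn_rpow_add_add_rpow_sub_rpow hα1.le hα2 hw₁ hw₄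
    (mem_Ici.2 (add_nonneg hw₂ hw₃)) (mem_Ici.2 (by linarith : 0 ≤ w₂' + w₃'))
    (add_le_add hw₂' hw₃')
  simpa only [add_assoc] using hmono
end

section
/- Let α > 1 and C > 0 be real numbers. Then for all real w₁, w₄ ≥ 0 with w₁ + w₄ ≤ C, one has w₁^α + w₄^α − (w₁+w₄)^α ≥ 2·(C/2)^α − C^α. That is, over the region {w₁, w₄ ≥ 0, w₁ + w₄ ≤ C}, the expression w₁^α + w₄^α − (w₁+w₄)^α is minimized at w₁ = w₄ = C/2. -/
/-!
Convexity of `t ↦ t^α` gives `w₁^α + w₄^α ≥ 2 (s/2)^α` for `s = w₁ + w₄`, so the expression is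
at least `2 (s/2)^α - s^α = (2^(1-α) - 1) s^α`. The coefficient is `≤ 0` because `α ≥ 1`, so this
lower bound decreases in `s`, and is smallest at `s = C`.
-/

open Set

namespace Real

theorem two_mul_rpow_half_add_le_add_rpow {p : ℝ} (hp : 1 ≤ p) {x y : ℝ} (hx : 0 ≤ x)
    (hy : 0 ≤ y) : 2 * ((x + y) / 2) ^ p ≤ x ^ p + y ^ p := by
  have hmid := (convexOn_rpow hp).2 (mem_Ici.2 hx) (mem_Ici.2 hy)
    (by norm_num : (0 : ℝ) ≤ 1 / 2) (by norm_num : (0 : ℝ) ≤ 1 / 2) (by norm_num)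
  simp only [smul_eq_mul] at hmid
  have hxy : (x + y) / 2 = 1 / 2 * x + 1 / 2 * y := by ring
  rw [hxy]
  linarith

theorem antitoneOn_two_mul_rpow_half_sub_rpow {p : ℝ} (hp : 1 ≤ p) :
    AntitoneOn (fun t : ℝ ↦ 2 * (t / 2) ^ p - t ^ p) (Ici 0) := by
  have hcoeff : 2 / (2 : ℝ) ^ p - 1 ≤ 0 := by
    rw [sub_nonpos, div_le_one (by positivity)]
    exact self_le_rpow_of_one_le one_le_two hp
  intro s hs t ht hst
  have hscale : ∀ u : ℝ, 0 ≤ u → 2 * (u / 2) ^ p - u ^ p = u ^ p * (2 / (2 : ℝ) ^ p - 1) := by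
    intro u hu
    rw [div_rpow hu zero_le_two]
    ring
  simp only [hscale s hs, hscale t ht]
  exact mul_le_mul_of_nonpos_right (rpow_le_rpow hs hst (zero_le_one.trans hp)) hcoeff

end Real

theorem superadditivity_gap_minimized_at_half_general
    (α C : ℝ) (hα : 1 < α) :
    ∀ w₁ w₄ : ℝ, 0 ≤ w₁ → 0 ≤ w₄ → w₁ + w₄ ≤ C →
      w₁ ^ α + w₄ ^ α - (w₁ + w₄) ^ α ≥ 2 * (C / 2) ^ α - C ^ α := by
  intro w₁ w₄ h₁ h₄ hsum
  have hs : 0 ≤ w₁ + w₄ := add_nonneg h₁ h₄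
  calc 2 * (C / 2) ^ α - C ^ α
      ≤ 2 * ((w₁ + w₄) / 2) ^ α - (w₁ + w₄) ^ α :=
        Real.antitoneOn_two_mul_rpow_half_sub_rpow hα.le hs (hs.trans hsum) hsum
    _ ≤ w₁ ^ α + w₄ ^ α - (w₁ + w₄) ^ α := by
        gcongr
        exact Real.two_mul_rpow_half_add_le_add_rpow hα.le h₁ h₄

/-- Over the region `{w₁, w₄ ≥ 0, w₁ + w₄ ≤ C}`, the expression
`w₁^α + w₄^α − (w₁+w₄)^α` is minimized at `w₁ = w₄ = C/2`. -/
theorem superadditivity_gap_minimized_at_half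
    (α C : ℝ) (hα : 1 < α) (hC : 0 < C) :
    ∀ w₁ w₄ : ℝ, 0 ≤ w₁ → 0 ≤ w₄ → w₁ + w₄ ≤ C →
      w₁ ^ α + w₄ ^ α - (w₁ + w₄) ^ α ≥ 2 * (C / 2) ^ α - C ^ α :=
  superadditivity_gap_minimized_at_half_general α C hα
end

section
/- Let α > 1, μ > 0, C > 0 be real numbers and let σ be a real number with σ ≥ μ(α−1)·C^α. Then for all real w₁, w₄ ≥ 0 with w₁ + w₄ ≤ C, one has σ + μ·(w₁^α + w₄^α − (w₁+w₄)^α) ≥ μ·C^α·(α + 2^{1−α} − 2), and this lower bound is nonnegative. -/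
/-! The power-mean inequality `(a + b)^α ≤ 2^(α-1) (a^α + b^α)` shows that splitting a load
`s = w₁ + w₄ ≤ C` over two switches saves at most `(1 - 2^(1-α)) s^α ≤ (1 - 2^(1-α)) C^α` in
dynamic power, while the startup power `σ ≥ μ (α - 1) C^α` more than pays for it. The resulting
constant `α + 2^(1-α) - 2` is nonnegative by `2^(1-α) = exp ((1-α) log 2) ≥ 1 + (1-α) log 2`
and `log 2 < 1`. -/

open Real

theorem Real.rpow_add_le_mul_rpow_add_rpow {a b p : ℝ} (ha : 0 ≤ a) (hb : 0 ≤ b) (hp : 1 ≤ p) :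
    (a + b) ^ p ≤ 2 ^ (p - 1) * (a ^ p + b ^ p) := by
  exact_mod_cast NNReal.rpow_add_le_mul_rpow_add_rpow ⟨a, ha⟩ ⟨b, hb⟩ hp

theorem two_rpow_one_sub_mul_rpow_add_le {a b p : ℝ} (ha : 0 ≤ a) (hb : 0 ≤ b) (hp : 1 ≤ p) :
    2 ^ (1 - p) * (a + b) ^ p ≤ a ^ p + b ^ p := by
  calc 2 ^ (1 - p) * (a + b) ^ p ≤ 2 ^ (1 - p) * (2 ^ (p - 1) * (a ^ p + b ^ p)) := by
        gcongr; exact Real.rpow_add_le_mul_rpow_add_rpow ha hb hp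
    _ = a ^ p + b ^ p := by
        rw [← mul_assoc, ← rpow_add two_pos, sub_add_sub_cancel', sub_self, rpow_zero, one_mul]

theorem two_rpow_one_sub_sub_one_mul_le_rpow_add_sub {a b p C : ℝ} (ha : 0 ≤ a) (hb : 0 ≤ b)
    (hp : 1 ≤ p) (habC : a + b ≤ C) :
    (2 ^ (1 - p) - 1) * C ^ p ≤ a ^ p + b ^ p - (a + b) ^ p := by
  have h_two : (2 : ℝ) ^ (1 - p) ≤ 1 := rpow_le_one_of_one_le_of_nonpos one_le_two (by linarith)
  have h_le : (a + b) ^ p ≤ C ^ p := rpow_le_rpow (by positivity) habC (by linarith)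
  nlinarith [two_rpow_one_sub_mul_rpow_add_le ha hb hp]

theorem add_two_rpow_one_sub_sub_two_nonneg {p : ℝ} (hp : 1 ≤ p) : 0 ≤ p + 2 ^ (1 - p) - 2 := by
  have h_exp : (1 - p) * log 2 + 1 ≤ (2 : ℝ) ^ (1 - p) := by
    rw [rpow_def_of_pos two_pos, mul_comm (log 2)]
    exact add_one_le_exp _
  nlinarith [log_two_lt_d9, log_pos one_lt_two]

theorem case2_chain_general
    (α μ C σ : ℝ) (hα : 1 < α) (hμ : 0 < μ)
    (hσ : σ ≥ μ * (α - 1) * C ^ α) :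
    ∀ w₁ w₄ : ℝ, 0 ≤ w₁ → 0 ≤ w₄ → w₁ + w₄ ≤ C →
      σ + μ * (w₁ ^ α + w₄ ^ α - (w₁ + w₄) ^ α) ≥
          μ * C ^ α * (α + (2 : ℝ) ^ (1 - α) - 2) ∧
        0 ≤ μ * C ^ α * (α + (2 : ℝ) ^ (1 - α) - 2) := by
  intro w₁ w₄ h₁ h₄ hle
  have h_saving := two_rpow_one_sub_sub_one_mul_le_rpow_add_sub h₁ h₄ hα.le hle
  constructor
  · calc μ * C ^ α * (α + (2 : ℝ) ^ (1 - α) - 2)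
          = μ * (α - 1) * C ^ α + μ * (((2 : ℝ) ^ (1 - α) - 1) * C ^ α) := by ring
      _ ≤ σ + μ * (w₁ ^ α + w₄ ^ α - (w₁ + w₄) ^ α) := by gcongr
  · have hC : 0 ≤ C := by linarith
    exact mul_nonneg (mul_nonneg hμ.le (rpow_nonneg hC α)) (add_two_rpow_one_sub_sub_two_nonneg hα.le)

/-- Case 2 of the proof of Principle 1: the chain of inequalities
`σ + μ·(w₁^α + w₄^α − (w₁+w₄)^α) ≥ μ·C^α·(α + 2^{1−α} − 2) ≥ 0`. -/
theorem case2_chain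
    (α μ C σ : ℝ) (hα : 1 < α) (hμ : 0 < μ) (hC : 0 < C)
    (hσ : σ ≥ μ * (α - 1) * C ^ α) :
    ∀ w₁ w₄ : ℝ, 0 ≤ w₁ → 0 ≤ w₄ → w₁ + w₄ ≤ C →
      σ + μ * (w₁ ^ α + w₄ ^ α - (w₁ + w₄) ^ α) ≥
          μ * C ^ α * (α + (2 : ℝ) ^ (1 - α) - 2) ∧
        0 ≤ μ * C ^ α * (α + (2 : ℝ) ^ (1 - α) - 2) :=
  case2_chain_general α μ C σ hα hμ hσ
end

section
/- (Principle 2 / Theorem 3.) Let α > 1 and μ > 0 be real numbers, and let k be a positive integer with (k : ℝ) ≥ 4^{α/(α−1)}. Then for all real u ≥ 0 and w ≥ 0, one has μ·(k·u + (k·(k−1)/2)·w)^α ≥ k·μ·(u + (k−1)·w)^α + (k/2)·μ·((k−1)·w)^α. That is, when each of k racks carries intra-rack traffic u and each ordered pair of distinct racks exchanges traffic w, the power of a single switch carrying all the traffic (load k·u + k(k−1)w/2) is at least the total load-dependent power of the k ToR switches (each with load u + (k−1)w) plus k/2 aggregation switches (each with load (k−1)w); hence distributing the VMs of a job into k racks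 consumes less load-dependent switch power than compacting them into a single rack. -/
/-! Write `A = u + (k-1)w` for a ToR load and `B = (k-1)w ≤ A` for an aggregation load; the
compacted load is `kA - (k/2)B ≥ (k/2)A`. Since `B ≤ A`, `k·A^α + (k/2)·B^α ≤ 2k·A^α`, and
`k^(α-1) ≥ 4^α` gives `(k/2)^α ≥ 2k`, so this is at most `((k/2)A)^α`. -/

open Real

lemma four_rpow_le_rpow_sub_one {α k : ℝ} (hα : 1 < α) (hk : (4 : ℝ) ^ (α / (α - 1)) ≤ k) :
    (4 : ℝ) ^ α ≤ k ^ (α - 1) := by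
  have h := rpow_le_rpow (by positivity) hk (sub_nonneg.mpr hα.le)
  rwa [← rpow_mul (by norm_num), div_mul_cancel₀ _ (sub_ne_zero.mpr hα.ne')] at h

lemma two_mul_le_div_two_rpow {α k : ℝ} (hα : 1 ≤ α) (hk : 0 ≤ k)
    (h : (4 : ℝ) ^ α ≤ k ^ (α - 1)) : 2 * k ≤ (k / 2) ^ α := by
  have h2 : (2 : ℝ) ≤ 2 ^ α := by simpa using rpow_le_rpow_of_exponent_le one_le_two hα
  have h4 : (4 : ℝ) ^ α = 2 ^ α * 2 ^ α := by
    rw [← mul_rpow zero_le_two zero_le_two]; norm_num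
  have hkα : k ^ α = k ^ (α - 1) * k := by
    rcases hk.eq_or_lt with rfl | hk0
    · simp [zero_rpow (by linarith : α ≠ 0)]
    · rw [← rpow_add_one hk0.ne', sub_add_cancel]
  have h2pos : (0 : ℝ) < 2 ^ α := by positivity
  rw [div_rpow hk zero_le_two, le_div_iff₀ h2pos, hkα]
  calc 2 * k * 2 ^ α ≤ 2 ^ α * 2 ^ α * k := by
        nlinarith [mul_le_mul_of_nonneg_right h2 (mul_nonneg h2pos.le hk)]
    _ ≤ k ^ (α - 1) * k := by rw [← h4]; exact mul_le_mul_of_nonneg_right h hk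

lemma mul_rpow_add_le_rpow_sub {α k a b : ℝ} (hα : 0 ≤ α) (hk : 0 ≤ k) (hb : 0 ≤ b)
    (hba : b ≤ a) (hkα : 2 * k ≤ (k / 2) ^ α) :
    k * a ^ α + k / 2 * b ^ α ≤ (k * a - k / 2 * b) ^ α := by
  have ha : 0 ≤ a := hb.trans hba
  have hpow : b ^ α ≤ a ^ α := rpow_le_rpow hb hba hα
  calc k * a ^ α + k / 2 * b ^ α ≤ 2 * k * a ^ α := by
        nlinarith [mul_le_mul_of_nonneg_left hpow hk, rpow_nonneg ha α]
    _ ≤ (k / 2) ^ α * a ^ α := mul_le_mul_of_nonneg_right hkα (by positivity)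
    _ = (k / 2 * a) ^ α := (mul_rpow (by positivity) ha).symm
    _ ≤ (k * a - k / 2 * b) ^ α := rpow_le_rpow (by positivity) (by nlinarith) hα

/-- Principle 2 (Theorem 3): with `k ≥ 4^{α/(α−1)}` racks, the load-dependent power of a
single switch carrying all the traffic is at least the total load-dependent power of the
`k` ToR switches plus `k/2` aggregation switches; hence distributing a job's VMs into `k`
racks consumes less power than compacting them into a single rack. -/
theorem principle2_distribute_into_racks
    (α μ : ℝ) (hα : 1 < α) (hμ : 0 < μ)
    (k : ℕ) (hk : 0 < k) (hkα : (k : ℝ) ≥ (4 : ℝ) ^ (α / (α - 1))) :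
    ∀ u w : ℝ, 0 ≤ u → 0 ≤ w →
      μ * ((k : ℝ) * u + ((k : ℝ) * ((k : ℝ) - 1) / 2) * w) ^ α ≥
        (k : ℝ) * μ * (u + ((k : ℝ) - 1) * w) ^ α +
          ((k : ℝ) / 2) * μ * (((k : ℝ) - 1) * w) ^ α := by
  intro u w hu hw
  have hk1 : (1 : ℝ) ≤ k := by exact_mod_cast hk
  have hB : 0 ≤ ((k : ℝ) - 1) * w := mul_nonneg (by linarith) hw
  have hload := mul_rpow_add_le_rpow_sub (zero_le_one.trans hα.le) (Nat.cast_nonneg k) hB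
    (le_add_of_nonneg_left hu : ((k : ℝ) - 1) * w ≤ u + ((k : ℝ) - 1) * w)
    (two_mul_le_div_two_rpow hα.le (Nat.cast_nonneg k) (four_rpow_le_rpow_sub_one hα hkα))
  have hL : (k : ℝ) * u + ((k : ℝ) * ((k : ℝ) - 1) / 2) * w
      = k * (u + ((k : ℝ) - 1) * w) - k / 2 * (((k : ℝ) - 1) * w) := by ring
  rw [ge_iff_le, hL]
  calc (k : ℝ) * μ * (u + ((k : ℝ) - 1) * w) ^ α + (k : ℝ) / 2 * μ * (((k : ℝ) - 1) * w) ^ α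
      = μ * ((k : ℝ) * (u + ((k : ℝ) - 1) * w) ^ α + k / 2 * (((k : ℝ) - 1) * w) ^ α) := by ring
    _ ≤ _ := mul_le_mul_of_nonneg_left hload hμ.le
end

section
/- (Lemma 1.) Let α > 1, μ > 0, C > 0 be real numbers and let σ be a real number with σ ≥ μ(α−1)·C^α. Let n ≥ 1 be an integer and let p₁,…,pₙ and δ₁,…,δₙ be real numbers with 0 ≤ δᵢ ≤ pᵢ ≤ C for each i and Σᵢ δᵢ ≤ C. Then (n+1)·σ + μ·Σᵢ (pᵢ − δᵢ)^α + μ·(Σᵢ δᵢ)^α ≥ n·σ + μ·Σᵢ pᵢ^α. That is, serving the same total traffic with n+1 switches (loads pᵢ − δᵢ for i = 1,…,n and one extra switch with load Σᵢ δᵢ) never consumes less power than serving it with n switches (loads pᵢ); hence the optimal energy-efficient routing uses as few aggregation switches as possible. -/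
/-! Everything comes from the graph of the convex function `x ↦ x ^ α` lying above its tangent
lines. The tangent at `pᵢ ≤ C` bounds the power saved on switch `i` by `α C^(α-1) δᵢ`, so the `n`
old switches save at most `α C^(α-1) Σᵢ δᵢ`. The tangent at `C` bounds this by
`(α - 1) C^α + (Σᵢ δᵢ)^α`: the dynamic power of the new switch, plus `(α - 1) C^α`, which after
scaling by `μ` is covered by the startup power `σ` of the new switch. -/

open Finset Real

theorem rpow_add_mul_rpow_sub_one_mul_sub_le_rpow {p x y : ℝ} (hp : 1 < p) (hx : 0 ≤ x)
    (hy : 0 ≤ y) : y ^ p + p * y ^ (p - 1) * (x - y) ≤ x ^ p := by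
  rcases hy.eq_or_lt with rfl | hy
  · simp [zero_rpow (by linarith : p ≠ 0), zero_rpow (by linarith : p - 1 ≠ 0),
      rpow_nonneg hx]
  have hbernoulli := one_add_mul_self_le_rpow_one_add (s := x / y - 1)
    (by linarith [div_nonneg hx hy.le]) hp.le
  rw [add_sub_cancel, div_rpow hx hy.le, le_div_iff₀ (rpow_pos_of_pos hy p)] at hbernoulli
  have hsplit : y ^ p = y ^ (p - 1) * y := by
    rw [← rpow_add_one hy.ne', sub_add_cancel]
  calc y ^ p + p * y ^ (p - 1) * (x - y) = (1 + p * (x / y - 1)) * y ^ p := by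
        rw [hsplit]; field_simp
    _ ≤ x ^ p := hbernoulli

theorem rpow_sub_rpow_sub_le {p C d q : ℝ} (hp : 1 < p) (hd : 0 ≤ d) (hdq : d ≤ q)
    (hqC : q ≤ C) : q ^ p - (q - d) ^ p ≤ p * C ^ (p - 1) * d := by
  have hq : 0 ≤ q := hd.trans hdq
  have htangent := rpow_add_mul_rpow_sub_one_mul_sub_le_rpow hp (sub_nonneg.mpr hdq) hq
  have hslope : p * q ^ (p - 1) * d ≤ p * C ^ (p - 1) * d := by gcongr
  linarith

theorem mul_rpow_sub_one_mul_le_s8 {p C s : ℝ} (hp : 1 < p) (hC : 0 ≤ C) (hs : 0 ≤ s) :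
    p * C ^ (p - 1) * s ≤ (p - 1) * C ^ p + s ^ p := by
  have htangent := rpow_add_mul_rpow_sub_one_mul_sub_le_rpow hp hs hC
  have hsplit : C ^ p = C ^ (p - 1) * C := by
    rw [← rpow_add_one' hC (by linarith), sub_add_cancel]
  rw [hsplit] at htangent ⊢
  linarith

theorem lemma1_fewer_switches_better_general
    (α μ C σ : ℝ) (hα : 1 < α) (hμ : 0 < μ) (hC : 0 < C)
    (hσ : σ ≥ μ * (α - 1) * C ^ α)
    (n : ℕ) (p δ : Fin n → ℝ)
    (hδ0 : ∀ i, 0 ≤ δ i) (hδp : ∀ i, δ i ≤ p i) (hpC : ∀ i, p i ≤ C) :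
    ((n : ℝ) + 1) * σ + μ * ∑ i, (p i - δ i) ^ α + μ * (∑ i, δ i) ^ α ≥
      (n : ℝ) * σ + μ * ∑ i, (p i) ^ α := by
  have hsaved : ∑ i, p i ^ α - ∑ i, (p i - δ i) ^ α ≤ α * C ^ (α - 1) * ∑ i, δ i := by
    rw [← sum_sub_distrib, mul_sum]
    exact sum_le_sum fun i _ => rpow_sub_rpow_sub_le hα (hδ0 i) (hδp i) (hpC i)
  have hnew := mul_rpow_sub_one_mul_le_s8 hα hC.le (Fintype.sum_nonneg hδ0)
  have hscaled := mul_le_mul_of_nonneg_left (hsaved.trans hnew) hμ.le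
  linarith

open Finset in
/-- Lemma 1: serving the same total traffic with `n+1` switches (loads `pᵢ − δᵢ` and one
extra switch with load `Σᵢ δᵢ`) never consumes less power than serving it with `n`
switches (loads `pᵢ`); hence the optimal energy-efficient routing uses as few aggregation
switches as possible. -/
theorem lemma1_fewer_switches_better
    (α μ C σ : ℝ) (hα : 1 < α) (hμ : 0 < μ) (hC : 0 < C)
    (hσ : σ ≥ μ * (α - 1) * C ^ α)
    (n : ℕ) (hn : 1 ≤ n) (p δ : Fin n → ℝ)
    (hδ0 : ∀ i, 0 ≤ δ i) (hδp : ∀ i, δ i ≤ p i) (hpC : ∀ i, p i ≤ C)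
    (hδsum : ∑ i, δ i ≤ C) :
    ((n : ℝ) + 1) * σ + μ * ∑ i, (p i - δ i) ^ α + μ * (∑ i, δ i) ^ α ≥
      (n : ℝ) * σ + μ * ∑ i, (p i) ^ α :=
  lemma1_fewer_switches_better_general α μ C σ hα hμ hC hσ n p δ hδ0 hδp hpC
end

section
/- Let α > 1 and C > 0 be real numbers and let n ≥ 1 be an integer. Then for all real numbers δ₁,…,δₙ with 0 ≤ δᵢ ≤ C for each i, one has Σᵢ (C − δᵢ)^α + (Σᵢ δᵢ)^α ≥ (n+1)·(n·C/(n+1))^α. That is, over the box [0,C]ⁿ the left-hand side is minimized at δ₁ = ⋯ = δₙ = C/(n+1). -/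
/-! The `n + 1` numbers `C - δᵢ` and `Σ δᵢ` are nonnegative with sum `n C`, so Jensen's
inequality for the convex function `x ↦ x ^ α` compares the sum of their `α`-th powers with
`n + 1` times the `α`-th power of their mean `n C / (n + 1)`. -/

open Finset

theorem ConvexOn.card_add_one_smul_map_mean_le {𝕜 E β ι : Type*} [Field 𝕜] [LinearOrder 𝕜]
    [IsStrictOrderedRing 𝕜] [AddCommGroup E] [AddCommGroup β] [PartialOrder β]
    [IsOrderedAddMonoid β] [Module 𝕜 E] [Module 𝕜 β] [IsStrictOrderedModule 𝕜 β]
    {s : Set E} {f : E → β} {t : Finset ι} {p : ι → E} {q : E}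
    (hf : ConvexOn 𝕜 s f) (hp : ∀ i ∈ t, p i ∈ s) (hq : q ∈ s) :
    ((#t : 𝕜) + 1) • f (((#t : 𝕜) + 1)⁻¹ • (q + ∑ i ∈ t, p i)) ≤ f q + ∑ i ∈ t, f (p i) := by
  have hm : (0 : 𝕜) < (#t : 𝕜) + 1 := by positivity
  have hweights : ((#t : 𝕜) + 1)⁻¹ + ∑ _i ∈ t, ((#t : 𝕜) + 1)⁻¹ = 1 := by
    rw [sum_const, nsmul_eq_mul]
    field_simp
    ring
  have jensen := hf.map_add_sum_le (fun _ _ => (inv_pos.2 hm).le) hweights hp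
    (inv_pos.2 hm).le hq
  rw [← smul_sum, ← smul_sum, ← smul_add, ← smul_add] at jensen
  calc ((#t : 𝕜) + 1) • f (((#t : 𝕜) + 1)⁻¹ • (q + ∑ i ∈ t, p i))
      ≤ ((#t : 𝕜) + 1) • ((#t : 𝕜) + 1)⁻¹ • (f q + ∑ i ∈ t, f (p i)) :=
        smul_le_smul_of_nonneg_left jensen hm.le
    _ = f q + ∑ i ∈ t, f (p i) := smul_inv_smul₀ hm.ne' _

open Finset in
theorem jensen_box_bound_general
    (α C : ℝ) (hα : 1 < α)
    (n : ℕ) (δ : Fin n → ℝ)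
    (hδ0 : ∀ i, 0 ≤ δ i) (hδC : ∀ i, δ i ≤ C) :
    ∑ i, (C - δ i) ^ α + (∑ i, δ i) ^ α ≥
      ((n : ℝ) + 1) * ((n : ℝ) * C / ((n : ℝ) + 1)) ^ α := by
  have jensen := (convexOn_rpow hα.le).card_add_one_smul_map_mean_le (t := univ)
    (p := fun i => C - δ i) (fun i _ => sub_nonneg.2 (hδC i))
    (sum_nonneg fun i _ => hδ0 i : (0 : ℝ) ≤ ∑ i, δ i)
  have htotal : ∑ i, δ i + ∑ i, (C - δ i) = n * C := by
    simp [sum_sub_distrib]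
  rw [htotal, card_univ, Fintype.card_fin, smul_eq_mul, smul_eq_mul, inv_mul_eq_div] at jensen
  linarith

open Finset in
/-- Jensen-type bound: over the box `[0,C]ⁿ` the quantity
`Σᵢ (C − δᵢ)^α + (Σᵢ δᵢ)^α` is minimized at `δ₁ = ⋯ = δₙ = C/(n+1)`. -/
theorem jensen_box_bound
    (α C : ℝ) (hα : 1 < α) (hC : 0 < C)
    (n : ℕ) (hn : 1 ≤ n) (δ : Fin n → ℝ)
    (hδ0 : ∀ i, 0 ≤ δ i) (hδC : ∀ i, δ i ≤ C) :
    ∑ i, (C - δ i) ^ α + (∑ i, δ i) ^ α ≥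
      ((n : ℝ) + 1) * ((n : ℝ) * C / ((n : ℝ) + 1)) ^ α :=
  jensen_box_bound_general α C hα n δ hδ0 hδC
end
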